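/- arXiv:2312.06595 — 4 statements merged into one kernel-verified Lean document; each statement's English description precedes it below -/
import Mathlib

section
/- The centred triangular maximal operator 𝒯 is bounded on L^1(𝔗) with operator norm at most 2, i.e. ‖𝒯f‖_1 ≤ 2‖f‖_1 for all f ∈ L^1(𝔗). -/
open scoped ENNReal NNReal
open Set

/-- A locally finite tree presented via the data induced by a fixed geodesic ray `ω`:
a predecessor map `pred`, a height (Busemann) function `ht` increasing by one along `pred`,
finite successor sets, and connectedness (any two vertices have a common ancestor). -/
structure TreeData (V : Type*) where
  pred : V → V
  ht : V → ℤ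
  ht_pred : ∀ x, ht (pred x) = ht x + 1
  fiber_finite : ∀ x, {y | pred y = x}.Finite
  connected : ∀ x y, ∃ k l : ℕ, pred^[k] x = pred^[l] y

namespace TreeData

variable {V : Type*}

/-- The set of successors of a vertex. -/
def succs (t : TreeData V) (x : V) : Set V := {y | t.pred y = x}

/-- Every vertex has at least 3 neighbours, i.e. at least 2 successors. -/
def Thick (t : TreeData V) : Prop := ∀ x, 2 ≤ (t.succs x).ncard

/-- Homogeneous tree `𝔗_b`: every vertex has exactly `b+1` neighbours, i.e. `b` successors. -/
def Homog (t : TreeData V) (b : ℕ) : Prop := ∀ x, (t.succs x).ncard = b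

/-- The triangle with vertex `x` and height `R`: all descendants of `x` within `R` generations. -/
def tri (t : TreeData V) (x : V) (R : ℕ) : Set V := {y | ∃ j ≤ R, t.pred^[j] y = x}

/-- The base of the triangle with vertex `x` and height `R`: the `R`-fold successors of `x`. -/
def base (t : TreeData V) (x : V) (R : ℕ) : Set V := {y | t.pred^[R] y = x}

/-- The graph distance on the tree. -/
noncomputable def dist (t : TreeData V) (x y : V) : ℕ :=
  sInf {n | ∃ k l : ℕ, k + l = n ∧ t.pred^[k] x = t.pred^[l] y}

/-- Number of points of a set, as an element of `ℝ≥0∞` (counting measure). -/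
noncomputable def esize (E : Set V) : ℝ≥0∞ := ∑' _ : E, (1 : ℝ≥0∞)

/-- The average of `|f|` over a set, with respect to counting measure. -/
noncomputable def setAvg (t : TreeData V) (S : Set V) (f : V → ℝ) : ℝ≥0∞ :=
  (∑' y : S, (‖f y‖₊ : ℝ≥0∞)) / (S.ncard : ℝ≥0∞)

/-- The centred triangular maximal operator `𝒯`. -/
noncomputable def cmax (t : TreeData V) (f : V → ℝ) (x : V) : ℝ≥0∞ :=
  ⨆ R : ℕ, t.setAvg (t.tri x R) f

/-- The uncentred triangular maximal operator `𝒰`. -/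
noncomputable def umax (t : TreeData V) (f : V → ℝ) (x : V) : ℝ≥0∞ :=
  ⨆ (v : V) (R : ℕ) (_ : x ∈ t.tri v R), t.setAvg (t.tri v R) f

/-- The uncentred base maximal operator `ℬᵘ`. -/
noncomputable def ubmax (t : TreeData V) (f : V → ℝ) (x : V) : ℝ≥0∞ :=
  ⨆ (v : V) (R : ℕ) (_ : x ∈ t.tri v R), t.setAvg (t.base v R) f

/-- The modified triangle `T'_r(x) = T_r(x) ∪ {p^r(x)}`. -/
def mtri (t : TreeData V) (x : V) (r : ℕ) : Set V := t.tri x r ∪ {t.pred^[r] x}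

/-- The modified centred triangular maximal operator `𝒯'`. -/
noncomputable def cmax' (t : TreeData V) (f : V → ℝ) (x : V) : ℝ≥0∞ :=
  ⨆ r : ℕ, t.setAvg (t.mtri x r) f

/-- The modified uncentred triangular maximal operator `𝒰'`. -/
noncomputable def umax' (t : TreeData V) (f : V → ℝ) (x : V) : ℝ≥0∞ :=
  ⨆ (v : V) (r : ℕ) (_ : x ∈ t.mtri v r), t.setAvg (t.mtri v r) f

/-- The `ℓ^p` norm with respect to counting measure, for `p ∈ [1,∞]`. -/
noncomputable def eLp (p : ℝ≥0∞) (g : V → ℝ≥0∞) : ℝ≥0∞ :=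
  if p = ∞ then ⨆ v, g v else (∑' v, g v ^ p.toReal) ^ (1 / p.toReal)

/-- `|f|` as an `ℝ≥0∞`-valued function. -/
noncomputable def nn (f : V → ℝ) (x : V) : ℝ≥0∞ := (‖f x‖₊ : ℝ≥0∞)

/-- The point mass at `o`. -/
noncomputable def delta (o : V) : V → ℝ := ({o} : Set V).indicator fun _ => 1

end TreeData

/-!
Writing `K(y, x) := sup_R 1_{T_R(x)}(y) / |T_R(x)|`, every average of `|f|` over a triangle
centred at `x` is at most `∑_y |f y| K(y, x)`, so `‖𝒯f‖₁ ≤ ∑_y |f y| ∑_x K(y, x)`. Now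
`K(y, x) ≠ 0` only for the ancestors `x = p^j(y)`, and a triangle containing `y` with vertex
`p^j(y)` contains the `2^j` descendants of `p^j(y)` in the generation of `y`, so
`K(y, p^j(y)) ≤ 2^{-j}` and `∑_x K(y, x) ≤ ∑_j 2^{-j} = 2`.
-/

namespace TreeData

variable {V : Type*} (t : TreeData V)

lemma ht_iterate_pred (y : V) (j : ℕ) : t.ht (t.pred^[j] y) = t.ht y + j := by
  induction j with
  | zero => simp
  | succ n ih => rw [Function.iterate_succ_apply', t.ht_pred, ih]; push_cast; ring

lemma iterate_pred_injective (y : V) : Function.Injective fun j : ℕ => t.pred^[j] y := by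
  intro j j' h
  simpa [ht_iterate_pred] using congrArg t.ht h

lemma preimage_pred_finite {S : Set V} (hS : S.Finite) : (t.pred ⁻¹' S).Finite := by
  have : t.pred ⁻¹' S = ⋃ w ∈ S, t.succs w := by ext y; simp [succs, eq_comm]
  rw [this]
  exact hS.biUnion fun w _ => t.fiber_finite w

lemma base_succ (x : V) (R : ℕ) : t.base x (R + 1) = t.pred ⁻¹' t.base x R := by
  ext y; simp [base, Function.iterate_succ_apply]

lemma base_finite (x : V) (R : ℕ) : (t.base x R).Finite := by
  induction R with
  | zero => simp [base]
  | succ n ih => rw [t.base_succ]; exact t.preimage_pred_finite ih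

lemma tri_finite (x : V) (R : ℕ) : (t.tri x R).Finite := by
  have : t.tri x R = ⋃ j ∈ Finset.range (R + 1), t.base x j := by
    ext y; simp [tri, base]
  rw [this]
  exact (Finset.range (R + 1)).finite_toSet.biUnion fun j _ => t.base_finite x j

lemma base_subset_tri (x : V) (R : ℕ) : t.base x R ⊆ t.tri x R :=
  fun _ hy => ⟨R, le_rfl, hy⟩

lemma tri_mono (x : V) {R R' : ℕ} (h : R ≤ R') : t.tri x R ⊆ t.tri x R' :=
  fun _ ⟨j, hj, hjy⟩ => ⟨j, hj.trans h, hjy⟩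

section CardLowerBound

variable {t} {b : ℕ}

lemma mul_ncard_le_ncard_preimage_pred (hb : ∀ x, b ≤ (t.succs x).ncard) {S : Set V}
    (hS : S.Finite) : b * S.ncard ≤ (t.pred ⁻¹' S).ncard := by
  classical
  have hfin := t.preimage_pred_finite hS
  have hbiUnion : hfin.toFinset = hS.toFinset.biUnion fun w => (t.fiber_finite w).toFinset := by
    ext y; simp [eq_comm]
  rw [Set.ncard_eq_toFinset_card _ hS, Set.ncard_eq_toFinset_card _ hfin, hbiUnion,
    Finset.card_biUnion]
  · calc b * hS.toFinset.card = ∑ _w ∈ hS.toFinset, b := by simp [mul_comm]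
      _ ≤ ∑ w ∈ hS.toFinset, (t.fiber_finite w).toFinset.card :=
        Finset.sum_le_sum fun w _ => (Set.ncard_eq_toFinset_card _ _) ▸ hb w
  · intro v _ w _ hvw
    simp only [Finset.disjoint_left, Set.Finite.mem_toFinset, Set.mem_ofPred_eq]
    rintro y rfl rfl
    exact hvw rfl

lemma pow_le_ncard_base (hb : ∀ x, b ≤ (t.succs x).ncard) (x : V) (R : ℕ) :
    b ^ R ≤ (t.base x R).ncard := by
  induction R with
  | zero => simp [base]
  | succ n ih =>
    rw [t.base_succ, pow_succ']
    exact (Nat.mul_le_mul_left b ih).trans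
      (mul_ncard_le_ncard_preimage_pred hb (t.base_finite x n))

lemma pow_le_ncard_tri (hb : ∀ x, b ≤ (t.succs x).ncard) (x : V) (R : ℕ) :
    b ^ R ≤ (t.tri x R).ncard :=
  (pow_le_ncard_base hb x R).trans (Set.ncard_le_ncard (t.base_subset_tri x R) (t.tri_finite x R))

end CardLowerBound

noncomputable def cmaxKernel (y x : V) : ℝ≥0∞ :=
  ⨆ R : ℕ, (t.tri x R).indicator (fun _ => ((t.tri x R).ncard : ℝ≥0∞)⁻¹) y

lemma setAvg_eq_tsum_mul_indicator (S : Set V) (f : V → ℝ) :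
    t.setAvg S f = ∑' y, nn f y * S.indicator (fun _ => (S.ncard : ℝ≥0∞)⁻¹) y := by
  rw [setAvg, div_eq_mul_inv, tsum_subtype S fun y => (‖f y‖₊ : ℝ≥0∞),
    ← ENNReal.tsum_mul_right]
  congr 1 with y
  by_cases hy : y ∈ S <;> simp [hy, nn]

lemma cmax_le_tsum_mul_cmaxKernel (f : V → ℝ) (x : V) :
    t.cmax f x ≤ ∑' y, nn f y * t.cmaxKernel y x :=
  iSup_le fun R => (t.setAvg_eq_tsum_mul_indicator _ f).trans_le <|
    ENNReal.tsum_le_tsum fun y => mul_le_mul_right (le_iSup (fun R =>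
      (t.tri x R).indicator (fun _ => ((t.tri x R).ncard : ℝ≥0∞)⁻¹) y) R) _

lemma support_cmaxKernel_subset (y : V) :
    Function.support (t.cmaxKernel y) ⊆ Set.range fun j : ℕ => t.pred^[j] y := by
  intro x hx
  by_contra hxy
  refine hx (ENNReal.iSup_eq_zero.mpr fun R => Set.indicator_of_notMem ?_ _)
  rintro ⟨j, -, hj⟩
  exact hxy ⟨j, hj⟩

lemma cmaxKernel_iterate_pred_le (hthick : t.Thick) (y : V) (j : ℕ) :
    t.cmaxKernel y (t.pred^[j] y) ≤ 2⁻¹ ^ j := by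
  refine iSup_le fun R => ?_
  by_cases hy : y ∈ t.tri (t.pred^[j] y) R
  · rw [Set.indicator_of_mem hy, ← ENNReal.inv_pow, ENNReal.inv_le_inv]
    obtain ⟨j', hj'R, hj'⟩ := hy
    obtain rfl : j' = j := t.iterate_pred_injective y hj'
    have hcard : 2 ^ j' ≤ (t.tri (t.pred^[j'] y) R).ncard :=
      (pow_le_ncard_tri hthick _ j').trans
        (Set.ncard_le_ncard (t.tri_mono _ hj'R) (t.tri_finite _ R))
    exact_mod_cast hcard
  · simp [Set.indicator_of_notMem hy]

lemma tsum_cmaxKernel_le_two (hthick : t.Thick) (y : V) : ∑' x, t.cmaxKernel y x ≤ 2 :=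
  calc ∑' x, t.cmaxKernel y x = ∑' j : ℕ, t.cmaxKernel y (t.pred^[j] y) :=
        ((t.iterate_pred_injective y).tsum_eq (t.support_cmaxKernel_subset y)).symm
    _ ≤ ∑' j : ℕ, (2 : ℝ≥0∞)⁻¹ ^ j :=
        ENNReal.tsum_le_tsum (t.cmaxKernel_iterate_pred_le hthick y)
    _ = 2 := by simp [ENNReal.tsum_geometric, ENNReal.one_sub_inv_two]

end TreeData

theorem stmt2_general {V : Type*} (t : TreeData V) (hthick : t.Thick) (f : V → ℝ) :
    ∑' x, t.cmax f x ≤ 2 * ∑' x, TreeData.nn f x :=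
  calc ∑' x, t.cmax f x ≤ ∑' x, ∑' y, TreeData.nn f y * t.cmaxKernel y x :=
        ENNReal.tsum_le_tsum fun x => t.cmax_le_tsum_mul_cmaxKernel f x
    _ = ∑' y, TreeData.nn f y * ∑' x, t.cmaxKernel y x := by
        rw [ENNReal.tsum_comm]; simp only [ENNReal.tsum_mul_left]
    _ ≤ ∑' y, TreeData.nn f y * 2 :=
        ENNReal.tsum_le_tsum fun y => mul_le_mul_right (t.tsum_cmaxKernel_le_two hthick y) _
    _ = 2 * ∑' x, TreeData.nn f x := by rw [ENNReal.tsum_mul_right, mul_comm]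

/-- The centred triangular maximal operator `𝒯` is bounded on `L^1`
with operator norm at most `2`. -/
theorem stmt2 {V : Type*} (t : TreeData V) (hthick : t.Thick) (f : V → ℝ)
    (hf : ∑' x, TreeData.nn f x ≠ ∞) :
    ∑' x, t.cmax f x ≤ 2 * ∑' x, TreeData.nn f x :=
  stmt2_general t hthick f
end

section
/- The centred triangular maximal operator 𝒯 is bounded on L^p(𝔗) for every p in [1, ∞]. -/
open scoped ENNReal NNReal
open Set

/-! By Jensen's inequality, `𝒯f(x)^q ≤ ∑_R (avg_{T_R(x)} |f|)^q ≤ ∑_R 2^{-R} ∑_{y ∈ T_R(x)} |f y|^q`,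
because thickness forces `|T_R(x)| ≥ 2^R`. A vertex `y` lies in `T_R(x)` only for the `R + 1`
ancestors `x = p^j(y)`, `j ≤ R`, so summing over `x` gives
`‖𝒯f‖_q^q ≤ (∑_R (R + 1) 2^{-R}) ‖f‖_q^q`. For `q = ∞` every average is at most `sup |f|`. -/

namespace Set

lemma mul_ncard_le_ncard_preimage {α β : Type*} {f : α → β} {s : Set β} {m : ℕ} (hs : s.Finite)
    (hfin : ∀ z ∈ s, (f ⁻¹' {z}).Finite) (hm : ∀ z ∈ s, m ≤ (f ⁻¹' {z}).ncard) :
    m * s.ncard ≤ (f ⁻¹' s).ncard := by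
  have hdisj : s.PairwiseDisjoint (fun z => f ⁻¹' {z}) := fun _ _ _ _ h =>
    (disjoint_singleton.2 h).preimage f
  rw [← biUnion_preimage_singleton, hs.ncard_biUnion hfin hdisj,
    finsum_mem_eq_finite_toFinset_sum _ hs, ncard_eq_toFinset_card _ hs, mul_comm,
    ← smul_eq_mul, ← Finset.sum_const]
  exact Finset.sum_le_sum fun z hz => hm z (hs.mem_toFinset.1 hz)

end Set

namespace ENNReal

variable {α : Type*}

lemma rpow_tsum_div_ncard_le {q : ℝ} (hq : 1 ≤ q) {S : Set α} (hS : S.Finite) (hne : S.Nonempty)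
    (a : α → ℝ≥0∞) :
    ((∑' y : S, a y) / S.ncard) ^ q ≤ (∑' y : S, a y ^ q) / S.ncard := by
  lift S to Finset α using hS
  have hcard : (S.card : ℝ≥0∞) ≠ 0 := by simpa [Finset.nonempty_iff_ne_empty] using hne
  rw [Finset.tsum_subtype', Finset.tsum_subtype' S fun y => a y ^ q, ncard_coe_finset]
  simp only [div_eq_mul_inv, mul_comm _ (S.card : ℝ≥0∞)⁻¹, Finset.mul_sum]
  refine rpow_arith_mean_le_arith_mean_rpow S _ a ?_ hq
  rw [Finset.sum_const, nsmul_eq_mul, ENNReal.mul_inv_cancel hcard (natCast_ne_top _)]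

lemma tsum_div_ncard_le_iSup {S : Set α} (hS : S.Finite) (a : α → ℝ≥0∞) :
    (∑' y : S, a y) / S.ncard ≤ ⨆ y, a y := by
  lift S to Finset α using hS
  refine ENNReal.div_le_of_le_mul ?_
  rw [Finset.tsum_subtype', ncard_coe_finset, mul_comm, ← nsmul_eq_mul, ← Finset.sum_const]
  exact Finset.sum_le_sum fun y _ => le_iSup a y

lemma iSup_rpow_le_tsum_rpow {ι : Type*} {q : ℝ} (hq : 0 < q) (a : ι → ℝ≥0∞) :
    (⨆ i, a i) ^ q ≤ ∑' i, a i ^ q := by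
  rw [← orderIsoRpow_apply q hq, OrderIso.map_iSup]
  exact iSup_le fun i => ENNReal.le_tsum i

lemma tsum_succ_mul_inv_two_pow_ne_top : ∑' R : ℕ, ((R : ℝ≥0∞) + 1) * 2⁻¹ ^ R ≠ ∞ := by
  have : Summable fun R : ℕ => ((R : ℝ≥0) + 1) * 2⁻¹ ^ R := by
    rw [← NNReal.summable_coe]
    push_cast
    have hr : ‖(2⁻¹ : ℝ)‖ < 1 := by norm_num
    simpa [add_mul] using (summable_pow_mul_geometric_of_norm_lt_one 1 hr).add
      (summable_geometric_of_norm_lt_one hr)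
  simpa [ENNReal.inv_pow] using ENNReal.tsum_coe_ne_top_iff_summable.2 this

end ENNReal

namespace TreeData

variable {V : Type*} (t : TreeData V)

lemma base_zero (x : V) : t.base x 0 = {x} := by
  ext y; simp [base]

lemma tri_eq_biUnion_base (x : V) (R : ℕ) : t.tri x R = ⋃ j ∈ Iic R, t.base x j := by
  ext y; simp [tri, base]

lemma mem_tri_self (x : V) (R : ℕ) : x ∈ t.tri x R :=
  ⟨0, R.zero_le, rfl⟩

variable {t}

lemma two_pow_le_ncard_base (hthick : t.Thick) (x : V) (R : ℕ) :
    2 ^ R ≤ (t.base x R).ncard := by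
  induction R with
  | zero => simp [base_zero]
  | succ R ih =>
    rw [base_succ, pow_succ']
    exact (Nat.mul_le_mul_left 2 ih).trans <| mul_ncard_le_ncard_preimage (t.base_finite x R)
      (fun z _ => t.fiber_finite z) fun z _ => hthick z

lemma two_pow_le_ncard_tri (hthick : t.Thick) (x : V) (R : ℕ) :
    2 ^ R ≤ (t.tri x R).ncard :=
  (two_pow_le_ncard_base hthick x R).trans <|
    ncard_le_ncard (t.base_subset_tri x R) (t.tri_finite x R)

variable (t)

lemma encard_setOf_mem_tri_le (y : V) (R : ℕ) : {x | y ∈ t.tri x R}.encard ≤ R + 1 := by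
  have : {x | y ∈ t.tri x R} = (fun j => t.pred^[j] y) '' Iic R := by
    ext x; simp [tri]
  rw [this]
  refine (encard_image_le _ _).trans ?_
  rw [← Finset.coe_Iic, encard_coe_eq_coe_finsetCard]
  simp

lemma tsum_tsum_tri_le (g : V → ℝ≥0∞) (R : ℕ) :
    ∑' x, ∑' y : t.tri x R, g y ≤ (R + 1) * ∑' y, g y :=
  calc ∑' x, ∑' y : t.tri x R, g y
      = ∑' y, ∑' _ : {x | y ∈ t.tri x R}, g y := by
        simp only [tsum_subtype]
        rw [ENNReal.tsum_comm]
        exact tsum_congr fun y => (tsum_subtype {x | y ∈ t.tri x R} fun _ => g y).symm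
    _ = ∑' y, {x | y ∈ t.tri x R}.encard * g y := by simp only [ENNReal.tsum_set_const]
    _ ≤ ∑' y, (R + 1) * g y := by
        gcongr with y
        exact_mod_cast t.encard_setOf_mem_tri_le y R
    _ = (R + 1) * ∑' y, g y := ENNReal.tsum_mul_left

variable {t}

lemma cmax_rpow_le (hthick : t.Thick) {q : ℝ} (hq : 1 ≤ q) (f : V → ℝ) (x : V) :
    t.cmax f x ^ q ≤ ∑' R : ℕ, 2⁻¹ ^ R * ∑' y : t.tri x R, nn f y ^ q := by
  refine (ENNReal.iSup_rpow_le_tsum_rpow (by linarith) _).trans <| ENNReal.tsum_le_tsum fun R => ?_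
  have hcard : (2 : ℝ≥0∞) ^ R ≤ (t.tri x R).ncard := by
    exact_mod_cast two_pow_le_ncard_tri hthick x R
  calc t.setAvg (t.tri x R) f ^ q
      ≤ (∑' y : t.tri x R, nn f y ^ q) / (t.tri x R).ncard :=
        ENNReal.rpow_tsum_div_ncard_le hq (t.tri_finite x R) ⟨x, t.mem_tri_self x R⟩ (nn f)
    _ ≤ 2⁻¹ ^ R * ∑' y : t.tri x R, nn f y ^ q := by
        rw [div_eq_mul_inv, mul_comm, ← ENNReal.inv_pow]
        gcongr

lemma tsum_cmax_rpow_le (hthick : t.Thick) {q : ℝ} (hq : 1 ≤ q) (f : V → ℝ) :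
    ∑' x, t.cmax f x ^ q ≤ (∑' R : ℕ, ((R : ℝ≥0∞) + 1) * 2⁻¹ ^ R) * ∑' y, nn f y ^ q :=
  calc ∑' x, t.cmax f x ^ q
      ≤ ∑' x, ∑' R : ℕ, 2⁻¹ ^ R * ∑' y : t.tri x R, nn f y ^ q :=
        ENNReal.tsum_le_tsum fun x => cmax_rpow_le hthick hq f x
    _ = ∑' R : ℕ, 2⁻¹ ^ R * ∑' x, ∑' y : t.tri x R, nn f y ^ q := by
        rw [ENNReal.tsum_comm]; simp only [ENNReal.tsum_mul_left]
    _ ≤ ∑' R : ℕ, 2⁻¹ ^ R * ((R + 1) * ∑' y, nn f y ^ q) := by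
        gcongr with R
        exact t.tsum_tsum_tri_le _ R
    _ = (∑' R : ℕ, ((R : ℝ≥0∞) + 1) * 2⁻¹ ^ R) * ∑' y, nn f y ^ q := by
        rw [← ENNReal.tsum_mul_right]
        exact tsum_congr fun R => by ring

lemma cmax_le_iSup (f : V → ℝ) (x : V) : t.cmax f x ≤ ⨆ y, nn f y :=
  iSup_le fun R => ENNReal.tsum_div_ncard_le_iSup (t.tri_finite x R) (nn f)

end TreeData

/-- The centred triangular maximal operator `𝒯` is bounded on `L^p`
for every `p ∈ [1,∞]`. -/
theorem stmt3 {V : Type*} (t : TreeData V) (hthick : t.Thick) (p : ℝ≥0∞) (hp : 1 ≤ p) :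
    ∃ C : ℝ≥0∞, C < ∞ ∧
      ∀ f : V → ℝ, TreeData.eLp p (t.cmax f) ≤ C * TreeData.eLp p (TreeData.nn f) := by
  by_cases hp_top : p = ∞
  · refine ⟨1, ENNReal.one_lt_top, fun f => ?_⟩
    simpa [TreeData.eLp, hp_top] using iSup_le (t.cmax_le_iSup f)
  have hq : 1 ≤ p.toReal := by simpa using ENNReal.toReal_mono hp_top hp
  refine ⟨(∑' R : ℕ, ((R : ℝ≥0∞) + 1) * 2⁻¹ ^ R) ^ (1 / p.toReal),
    ENNReal.rpow_lt_top_of_nonneg (by positivity) ENNReal.tsum_succ_mul_inv_two_pow_ne_top,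
    fun f => ?_⟩
  simp only [TreeData.eLp, if_neg hp_top]
  rw [← ENNReal.mul_rpow_of_nonneg _ _ (by positivity)]
  exact ENNReal.rpow_le_rpow (TreeData.tsum_cmax_rpow_le hthick hq f) (by positivity)
end

section
/- If x belongs to n distinct triangles T_1, ..., T_n of a family of pairwise inclusion-incomparable triangles, then each T_j has height at least n−1, and at least one T_j satisfies d(x, β(T_j)) ≥ n−1. -/
open scoped ENNReal NNReal
open Set

namespace TreeData

variable {V : Type*}

lemma ht_iterate (t : TreeData V) (z : V) (m : ℕ) :
    t.ht (t.pred^[m] z) = t.ht z + m := by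
  induction m with
  | zero => simp
  | succ m ih => rw [Function.iterate_succ_apply', t.ht_pred, ih]; push_cast; ring

lemma tri_subset_aux (t : TreeData V) (x : V) {j j' R R' : ℕ}
    (hj : j ≤ j') (hR : R + j' ≤ R' + j) :
    t.tri (t.pred^[j] x) R ⊆ t.tri (t.pred^[j'] x) R' := by
  rintro y ⟨k, hk, hky⟩
  refine ⟨k + (j' - j), by omega, ?_⟩
  rw [Nat.add_comm, Function.iterate_add_apply, hky, ← Function.iterate_add_apply]
  congr 1
  omega

end TreeData

/-- If `x` belongs to all `n` triangles of a family of pairwise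
inclusion-incomparable triangles, then each triangle has height at least `n-1`, and at
least one triangle `T` satisfies `d(x, β(T)) ≥ n-1`. -/
theorem stmt10 {V : Type*} (t : TreeData V) (𝒢 : Finset (V × ℕ)) (hne : 𝒢.Nonempty)
    (hinc : ∀ a ∈ 𝒢, ∀ b ∈ 𝒢, a ≠ b → ¬ t.tri a.1 a.2 ⊆ t.tri b.1 b.2)
    (x : V) (hx : ∀ a ∈ 𝒢, x ∈ t.tri a.1 a.2) :
    (∀ a ∈ 𝒢, 𝒢.card - 1 ≤ a.2) ∧
      ∃ a ∈ 𝒢, ∀ y ∈ t.base a.1 a.2, 𝒢.card - 1 ≤ t.dist x y := by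
  classical
  set F : V × ℕ → ℕ := fun a => sInf {j | j ≤ a.2 ∧ t.pred^[j] x = a.1} with hF
  have hFspec : ∀ a ∈ 𝒢, F a ≤ a.2 ∧ t.pred^[F a] x = a.1 := by
    intro a ha
    obtain ⟨j, hj, hje⟩ := hx a ha
    have : F a ∈ {j | j ≤ a.2 ∧ t.pred^[j] x = a.1} := Nat.sInf_mem ⟨j, hj, hje⟩
    exact this
  have hsub : ∀ a ∈ 𝒢, ∀ b ∈ 𝒢, F a ≤ F b → a.2 + F b ≤ b.2 + F a →
      t.tri a.1 a.2 ⊆ t.tri b.1 b.2 := by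
    intro a ha b hb h1 h2
    rw [← (hFspec a ha).2, ← (hFspec b hb).2]
    exact t.tri_subset_aux x h1 h2
  have hord : ∀ a ∈ 𝒢, ∀ b ∈ 𝒢, F a < F b → b.2 + F a < a.2 + F b := by
    intro a ha b hb h
    by_contra hc
    push_neg at hc
    have hab : a ≠ b := by rintro rfl; omega
    exact hinc a ha b hb hab (hsub a ha b hb h.le hc)
  have hFinj : ∀ a ∈ 𝒢, ∀ b ∈ 𝒢, F a = F b → a = b := by
    intro a ha b hb h
    by_contra hab
    rcases le_total a.2 b.2 with hle | hle
    · exact hinc a ha b hb hab (hsub a ha b hb h.le (by omega))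
    · exact hinc b hb a ha (Ne.symm hab) (hsub b hb a ha h.ge (by omega))
  have hcount1 : ∀ a ∈ 𝒢, (𝒢.filter (fun b => F b < F a)).card ≤ F a := by
    intro a ha
    have h := Finset.card_le_card_of_injOn (t := Finset.range (F a)) F
      (fun b hb => Finset.mem_range.2 (Finset.mem_filter.1 hb).2)
      (fun b hb c hc h => hFinj b (Finset.mem_filter.1 hb).1 c (Finset.mem_filter.1 hc).1 h)
    simpa using h
  have hDlt : ∀ a ∈ 𝒢, ∀ b ∈ 𝒢, F a < F b → b.2 - F b < a.2 - F a := by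
    intro a ha b hb h
    have h1 := hord a ha b hb h
    have h2 := (hFspec a ha).1
    have h3 := (hFspec b hb).1
    omega
  have hcount2 : ∀ a ∈ 𝒢, (𝒢.filter (fun b => F a < F b)).card ≤ a.2 - F a := by
    intro a ha
    have h := Finset.card_le_card_of_injOn (t := Finset.range (a.2 - F a))
      (fun b => b.2 - F b)
      (fun b hb => Finset.mem_range.2 (hDlt a ha b (Finset.mem_filter.1 hb).1
        (Finset.mem_filter.1 hb).2))
      ?_
    · simpa using h
    · intro b hb c hc h
      simp only [Finset.coe_filter, Set.mem_setOf_eq] at hb hc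
      have h0 : b.2 - F b = c.2 - F c := h
      rcases lt_trichotomy (F b) (F c) with h' | h' | h'
      · exact absurd h0 (by have := hDlt b hb.1 c hc.1 h'; omega)
      · exact hFinj b hb.1 c hc.1 h'
      · exact absurd h0 (by have := hDlt c hc.1 b hb.1 h'; omega)
  have hmain : ∀ a ∈ 𝒢, 𝒢.card ≤ a.2 + 1 := by
    intro a ha
    have hsplit : (𝒢.filter (fun b => F b < F a)).card
        + (𝒢.filter (fun b => ¬ F b < F a)).card = 𝒢.card :=
      Finset.card_filter_add_card_filter_not _
    have hsub2 : 𝒢.filter (fun b => ¬ F b < F a) ⊆ insert a (𝒢.filter (fun b => F a < F b)) := by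
      intro b hb
      simp only [Finset.mem_filter, not_lt] at hb
      rcases eq_or_lt_of_le hb.2 with h | h
      · exact Finset.mem_insert.2 (Or.inl (hFinj b hb.1 a ha h.symm))
      · exact Finset.mem_insert.2 (Or.inr (Finset.mem_filter.2 ⟨hb.1, h⟩))
    have h1 := hcount1 a ha
    have h2 := hcount2 a ha
    have h4 := Finset.card_le_card hsub2
    have h5 := Finset.card_insert_le a (𝒢.filter (fun b => F a < F b))
    have h6 := (hFspec a ha).1
    omega
  constructor
  · intro a ha
    have := hmain a ha
    omega
  · obtain ⟨a, ha, hmin⟩ := Finset.exists_min_image 𝒢 F hne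
    refine ⟨a, ha, ?_⟩
    intro y hy
    have hDa : 𝒢.card - 1 ≤ a.2 - F a := by
      have hsub3 : 𝒢.erase a ⊆ 𝒢.filter (fun b => F a < F b) := by
        intro b hb
        have hb1 := Finset.mem_of_mem_erase hb
        have hne' : b ≠ a := Finset.ne_of_mem_erase hb
        refine Finset.mem_filter.2 ⟨hb1, lt_of_le_of_ne (hmin b hb1) ?_⟩
        intro h
        exact hne' (hFinj b hb1 a ha h.symm)
      have h2 := hcount2 a ha
      have h3 := Finset.card_le_card hsub3
      have h4 := Finset.card_erase_of_mem ha
      omega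
    have hyb : t.pred^[a.2] y = t.pred^[F a] x := by
      have h := (hFspec a ha).2
      exact hy.trans h.symm
    have hhty : t.ht y + (a.2 : ℤ) = t.ht x + (F a : ℤ) := by
      have h1 := t.ht_iterate y a.2
      have h2 := t.ht_iterate x (F a)
      rw [hyb, h2] at h1
      omega
    have hFa := (hFspec a ha).1
    show 𝒢.card - 1 ≤ sInf {n | ∃ k l : ℕ, k + l = n ∧ t.pred^[k] x = t.pred^[l] y}
    refine le_csInf ?_ ?_
    · obtain ⟨k, l, hkl⟩ := t.connected x y
      exact ⟨k + l, k, l, rfl, hkl⟩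
    · rintro m ⟨k, l, rfl, hkleq⟩
      have h1 := t.ht_iterate x k
      have h2 := t.ht_iterate y l
      rw [hkleq, h2] at h1
      omega
end

section
/- Let 𝔗 be the tree in which every vertex off the horocycle ℌ_0 has exactly 3 neighbours and the j-th vertex x_j of ℌ_0 has j+2 neighbours. Then the modified centred triangular maximal operator 𝒯' is unbounded on L^p(𝔗) for every p < ∞: its operator norm on L^p is at least (j+2)^{1/p}/4 for every j ≥ 1. -/
open scoped ENNReal NNReal
open Set

/-- On the tree in which every vertex off the horocycle `ℌ₀` has 3
neighbours (2 successors) and the `j`-th vertex `x_j` of `ℌ₀` has `j+2` neighbours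
(`j+1` successors), the modified centred maximal operator `𝒯'` has operator norm on `L^p`
at least `(j+2)^{1/p}/4` for every `j ≥ 1` (note `‖δ_{x_j}‖_p = 1`), hence is unbounded
on `L^p` for every `p < ∞`. -/
theorem stmt19 {V : Type*} (t : TreeData V) (x : ℕ → V)
    (hoff : ∀ v, t.ht v ≠ 0 → (t.succs v).ncard = 2)
    (hval : ∀ j : ℕ, 1 ≤ j → t.ht (x j) = 0 ∧ (t.succs (x j)).ncard = j + 1)
    (henum : ∀ v, t.ht v = 0 → ∃ j : ℕ, 1 ≤ j ∧ x j = v)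
    (hinj : ∀ j k : ℕ, 1 ≤ j → 1 ≤ k → x j = x k → j = k)
    (p : ℝ) (hp : 1 ≤ p) :
    (∀ j : ℕ, 1 ≤ j →
        ENNReal.ofReal (((j : ℝ) + 2) ^ (1 / p) / 4) ≤
          TreeData.eLp (ENNReal.ofReal p) (t.cmax' (TreeData.delta (x j)))) ∧
      ¬ ∃ C : ℝ≥0∞, C < ∞ ∧
          ∀ f : V → ℝ, TreeData.eLp (ENNReal.ofReal p) (t.cmax' f) ≤
            C * TreeData.eLp (ENNReal.ofReal p) (TreeData.nn f) := by
  classical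
  have hp0 : (0:ℝ) < p := lt_of_lt_of_le one_pos hp
  have hpred_ne : ∀ v : V, t.pred v ≠ v := by
    intro v h
    have := t.ht_pred v
    rw [h] at this; omega
  -- ℓ^p norm of the point mass is 1
  have hdelta : ∀ o : V, TreeData.eLp (ENNReal.ofReal p) (TreeData.nn (TreeData.delta o)) = 1 := by
    intro o
    rw [TreeData.eLp, if_neg ENNReal.ofReal_ne_top, ENNReal.toReal_ofReal hp0.le]
    have : ∑' v, TreeData.nn (TreeData.delta o) v ^ p = 1 := by
      rw [tsum_eq_single o]
      · simp [TreeData.nn, TreeData.delta, ENNReal.one_rpow]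
      · intro v hv
        simp [TreeData.nn, TreeData.delta, Set.indicator_apply, hv,
          ENNReal.zero_rpow_of_pos hp0]
    rw [this, ENNReal.one_rpow]
  -- Main lower bound
  have main : ∀ j : ℕ, 1 ≤ j →
      ENNReal.ofReal (((j : ℝ) + 2) ^ (1 / p) / 4) ≤
        TreeData.eLp (ENNReal.ofReal p) (t.cmax' (TreeData.delta (x j))) := by
    intro j hj
    obtain ⟨hht, hcard⟩ := hval j hj
    set o := x j with ho
    set S : Set V := insert o (t.succs o) with hS
    have hfin : (t.succs o).Finite := t.fiber_finite o
    have honot : o ∉ t.succs o := fun h => hpred_ne o h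
    have hSfin : S.Finite := hfin.insert o
    have hScard : S.ncard = j + 2 := by
      rw [hS, Set.ncard_insert_of_notMem honot hfin, hcard]
    -- pointwise bound 𝒯'δ ≥ 1/4 on S
    have hpt : ∀ v ∈ S, (4 : ℝ≥0∞)⁻¹ ≤ t.cmax' (TreeData.delta o) v := by
      intro v hv
      rcases Set.mem_insert_iff.mp hv with rfl | hv
      · -- o = o : take r = 0
        have htri : t.tri o 0 = {o} := by
          ext z
          simp only [TreeData.tri, Set.mem_setOf_eq, Nat.le_zero, Set.mem_singleton_iff]
          constructor
          · rintro ⟨k, rfl, h⟩; simpa using h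
          · rintro rfl; exact ⟨0, rfl, rfl⟩
        have hm : t.mtri o 0 = {o} := by
          simp [TreeData.mtri, htri]
        have h1 : (1:ℝ≥0∞) ≤ t.setAvg (t.mtri o 0) (TreeData.delta o) := by
          rw [TreeData.setAvg, hm]
          have hmem : o ∈ ({o} : Set V) := rfl
          have hle : (1:ℝ≥0∞) ≤ ∑' y : ({o} : Set V), (‖TreeData.delta o y‖₊ : ℝ≥0∞) := by
            have := ENNReal.le_tsum (f := fun y : ({o} : Set V) => (‖TreeData.delta o y‖₊ : ℝ≥0∞)) ⟨o, hmem⟩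
            simpa [TreeData.delta] using this
          have hn : (({o} : Set V).ncard : ℝ≥0∞) = 1 := by simp
          rw [hn, div_one]
          exact hle
        calc (4 : ℝ≥0∞)⁻¹ ≤ 1 := by norm_num
          _ ≤ t.setAvg (t.mtri o 0) (TreeData.delta o) := h1
          _ ≤ t.cmax' (TreeData.delta o) o := by
              rw [TreeData.cmax']
              exact le_iSup (fun r : ℕ => t.setAvg (t.mtri o r) (TreeData.delta o)) 0
      · -- v a successor of o : take r = 1
        have hv' : t.pred v = o := hv
        have htv : t.ht v = -1 := by
          have := t.ht_pred v
          rw [hv', hht] at this; omega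
        have hsv : (t.succs v).ncard = 2 := hoff v (by omega)
        have hvfin : (t.succs v).Finite := t.fiber_finite v
        have hvnot : v ∉ t.succs v := fun h => hpred_ne v h
        have htri : t.tri v 1 = insert v (t.succs v) := by
          ext z
          simp only [TreeData.tri, Set.mem_setOf_eq, Set.mem_insert_iff, TreeData.succs]
          constructor
          · rintro ⟨k, hk, h⟩
            interval_cases k
            · left; simpa using h
            · right; simpa using h
          · rintro (rfl | h)
            · exact ⟨0, by norm_num, rfl⟩
            · exact ⟨1, le_refl 1, by simpa using h⟩
        have honotri : o ∉ t.tri v 1 := by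
          rw [htri]
          rintro (rfl | h)
          · omega
          · have := t.ht_pred o
            rw [show t.pred o = v from h, htv, hht] at this; omega
        have hm : t.mtri v 1 = insert o (t.tri v 1) := by
          rw [TreeData.mtri]
          have : t.pred^[1] v = o := by simpa using hv'
          rw [this, Set.union_singleton]
        have htrifin : (t.tri v 1).Finite := by rw [htri]; exact hvfin.insert v
        have hmcard : (t.mtri v 1).ncard = 4 := by
          rw [hm, Set.ncard_insert_of_notMem honotri htrifin, htri,
            Set.ncard_insert_of_notMem hvnot hvfin, hsv]
        have h1 : (4 : ℝ≥0∞)⁻¹ ≤ t.setAvg (t.mtri v 1) (TreeData.delta o) := by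
          rw [TreeData.setAvg, hmcard]
          have hmem : o ∈ t.mtri v 1 := by rw [hm]; exact Set.mem_insert _ _
          have hle : (1:ℝ≥0∞) ≤ ∑' y : (t.mtri v 1), (‖TreeData.delta o y‖₊ : ℝ≥0∞) := by
            have := ENNReal.le_tsum (f := fun y : (t.mtri v 1) => (‖TreeData.delta o y‖₊ : ℝ≥0∞)) ⟨o, hmem⟩
            simpa [TreeData.delta] using this
          calc (4 : ℝ≥0∞)⁻¹ = 1 / (4:ℝ≥0∞) := by rw [one_div]
            _ ≤ (∑' y : (t.mtri v 1), (‖TreeData.delta o y‖₊ : ℝ≥0∞)) / ((4:ℕ) : ℝ≥0∞) := by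
                apply ENNReal.div_le_div _ (by norm_num)
                exact hle
          -- norm_num cast
        calc (4 : ℝ≥0∞)⁻¹ ≤ t.setAvg (t.mtri v 1) (TreeData.delta o) := h1
          _ ≤ t.cmax' (TreeData.delta o) v := by
              rw [TreeData.cmax']
              exact le_iSup (fun r : ℕ => t.setAvg (t.mtri v r) (TreeData.delta o)) 1
    -- sum the pointwise bounds
    have hsum : (((j:ℝ≥0∞)+2) * (4:ℝ≥0∞)⁻¹ ^ p) ≤ ∑' v, t.cmax' (TreeData.delta o) v ^ p := by
      have hcardF : hSfin.toFinset.card = j + 2 := by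
        rw [← Set.ncard_eq_toFinset_card S hSfin]
        exact hScard
      calc ((j:ℝ≥0∞)+2) * (4:ℝ≥0∞)⁻¹ ^ p
          = ∑ v ∈ hSfin.toFinset, (4:ℝ≥0∞)⁻¹ ^ p := by
            rw [Finset.sum_const, hcardF, nsmul_eq_mul]; push_cast; ring_nf
        _ ≤ ∑ v ∈ hSfin.toFinset, t.cmax' (TreeData.delta o) v ^ p := by
            apply Finset.sum_le_sum
            intro v hv
            exact ENNReal.rpow_le_rpow (hpt v (hSfin.mem_toFinset.mp hv)) hp0.le
        _ ≤ ∑' v, t.cmax' (TreeData.delta o) v ^ p := ENNReal.sum_le_tsum _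
    have h4 : (((4:ℝ≥0∞)⁻¹) ^ p) ^ (1/p) = 4⁻¹ := by
      rw [← ENNReal.rpow_mul, mul_one_div_cancel hp0.ne', ENNReal.rpow_one]
    have hof : ENNReal.ofReal (((j:ℝ)+2)^(1/p)/4) = (((j:ℝ≥0∞)+2) * (4:ℝ≥0∞)⁻¹ ^ p)^(1/p) := by
      rw [ENNReal.mul_rpow_of_nonneg _ _ (by positivity), h4]
      rw [div_eq_mul_inv, ENNReal.ofReal_mul (by positivity),
        ← ENNReal.ofReal_rpow_of_pos (by positivity)]
      congr 1
      · congr 1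
        rw [ENNReal.ofReal_add (by positivity) (by norm_num)]
        simp
      · rw [ENNReal.ofReal_inv_of_pos (by norm_num)]
        norm_num
    rw [TreeData.eLp, if_neg ENNReal.ofReal_ne_top, ENNReal.toReal_ofReal hp0.le, hof]
    exact ENNReal.rpow_le_rpow hsum (by positivity)
  refine ⟨main, ?_⟩
  rintro ⟨C, hC, hb⟩
  set M := C.toReal with hM
  have hM0 : 0 ≤ M := ENNReal.toReal_nonneg
  set c : ℝ := (4*(M+1))^p with hc
  have hc0 : (0:ℝ) ≤ c := Real.rpow_nonneg (by linarith) p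
  set j : ℕ := ⌈c⌉₊ + 1 with hjdef
  have hj : 1 ≤ j := Nat.le_add_left 1 _
  have hcj : c < (j:ℝ) + 2 := by
    have h1 : c ≤ (⌈c⌉₊ : ℝ) := Nat.le_ceil c
    have h2 : ((⌈c⌉₊ : ℕ) : ℝ) ≤ (j:ℝ) := by push_cast [hjdef]; linarith
    linarith
  have hgt : 4*(M+1) < ((j:ℝ)+2)^(1/p) := by
    have := Real.rpow_lt_rpow hc0 hcj (by positivity : (0:ℝ) < 1/p)
    calc 4*(M+1) = ((4*(M+1))^p)^(1/p) := by
          rw [← Real.rpow_mul (by linarith : (0:ℝ) ≤ 4*(M+1)), mul_one_div_cancel hp0.ne',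
            Real.rpow_one]
      _ < ((j:ℝ)+2)^(1/p) := this
  have hMlt : M < ((j:ℝ)+2)^(1/p)/4 := by
    rw [lt_div_iff₀ (by norm_num)]
    linarith
  have hClt : C < ENNReal.ofReal (((j:ℝ)+2)^(1/p)/4) := by
    rw [ENNReal.lt_ofReal_iff_toReal_lt hC.ne]
    exact hMlt
  have hble := hb (TreeData.delta (x j))
  rw [hdelta (x j), mul_one] at hble
  exact absurd ((main j hj).trans hble) (not_le.mpr hClt)
end
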